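/- arXiv:2509.08899 — 2 statements merged into one kernel-verified Lean document; each statement's English description precedes it below -/
import Mathlib

section
/- Dephasing does not increase ergotropy: if ρ is a density matrix and Δ(ρ) := Σᵢ ⟨εᵢ|ρ|εᵢ⟩ |εᵢ⟩⟨εᵢ| is its dephased version in an eigenbasis {|εᵢ⟩} of H, then E(Δ(ρ)) ≤ E(ρ) and A(Δ(ρ)) ≤ A(ρ). -/
open Matrix
open scoped BigOperators ComplexOrder

noncomputable def energy {d : ℕ} (H ρ : Matrix (Fin d) (Fin d) ℂ) : ℝ :=
  (Matrix.trace (ρ * H)).re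

noncomputable def ergotropy {d : ℕ} (H ρ : Matrix (Fin d) (Fin d) ℂ) : ℝ :=
  energy H ρ - ⨅ U : Matrix.unitaryGroup (Fin d) ℂ,
    energy H ((U : Matrix (Fin d) (Fin d) ℂ) * ρ * star (U : Matrix (Fin d) (Fin d) ℂ))

noncomputable def antiErgotropy {d : ℕ} (H ρ : Matrix (Fin d) (Fin d) ℂ) : ℝ :=
  (⨆ U : Matrix.unitaryGroup (Fin d) ℂ,
    energy H ((U : Matrix (Fin d) (Fin d) ℂ) * ρ * star (U : Matrix (Fin d) (Fin d) ℂ))) - energy H ρ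

noncomputable def minErg {d : ℕ} (H : Matrix (Fin d) (Fin d) ℂ) (E : ℝ) : ℝ :=
  sInf {x : ℝ | ∃ ρ : Matrix (Fin d) (Fin d) ℂ,
    ρ.PosSemidef ∧ ρ.trace = 1 ∧ energy H ρ = E ∧ ergotropy H ρ = x}


/-! Dephasing in an eigenbasis of `H` is the uniform average of the conjugations by the unitaries
`W k = V * diag (ζ ^ (k * i)) * V†`, `ζ` a primitive `d`-th root of unity, because
`∑ k, ζ ^ (k * (i - j))` vanishes for `i ≠ j`. Each `W k` commutes with `H`, so the average keeps
the energy, while the energy of a rotation `U Δ(ρ) U†` is the average of the energies of the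
rotations `(U W k) ρ (U W k)†` of `ρ`, hence lies between the infimum and the supremum of the
energy over the unitary orbit of `ρ`; these are finite because the unitary group is compact. -/

section UnitaryGroup

variable {n 𝕜 : Type*} [Fintype n] [DecidableEq n] [RCLike 𝕜]

theorem Matrix.isCompact_unitaryGroup : IsCompact (unitaryGroup n 𝕜 : Set (Matrix n n 𝕜)) := by
  have hbox : IsCompact (Set.univ.pi fun _ : n => Set.univ.pi fun _ : n =>
      Metric.closedBall (0 : 𝕜) 1 : Set (Matrix n n 𝕜)) :=
    isCompact_univ_pi fun _ => isCompact_univ_pi fun _ => isCompact_closedBall 0 1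
  refine hbox.of_isClosed_subset (isClosed_unitary (R := Matrix n n 𝕜)) fun U hU i _ j _ => ?_
  simpa using entry_norm_bound_of_unitary hU i j

instance : CompactSpace (unitaryGroup n 𝕜) :=
  isCompact_iff_compactSpace.mp isCompact_unitaryGroup

end UnitaryGroup

section OrbitEnergy

variable {d : ℕ} (H ρ : Matrix (Fin d) (Fin d) ℂ)

noncomputable def orbitEnergy (U : unitaryGroup (Fin d) ℂ) : ℝ :=
  energy H ((U : Matrix (Fin d) (Fin d) ℂ) * ρ * star (U : Matrix (Fin d) (Fin d) ℂ))

theorem ergotropy_eq_sub_iInf_orbitEnergy :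
    ergotropy H ρ = energy H ρ - ⨅ U, orbitEnergy H ρ U := rfl

theorem antiErgotropy_eq_iSup_orbitEnergy_sub :
    antiErgotropy H ρ = (⨆ U, orbitEnergy H ρ U) - energy H ρ := rfl

theorem continuous_orbitEnergy : Continuous (orbitEnergy H ρ) := by
  unfold orbitEnergy energy
  fun_prop

theorem bddBelow_range_orbitEnergy : BddBelow (Set.range (orbitEnergy H ρ)) :=
  (isCompact_range (continuous_orbitEnergy H ρ)).bddBelow

theorem bddAbove_range_orbitEnergy : BddAbove (Set.range (orbitEnergy H ρ)) :=
  (isCompact_range (continuous_orbitEnergy H ρ)).bddAbove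

theorem orbitEnergy_mul (U W : unitaryGroup (Fin d) ℂ) :
    orbitEnergy H ρ (U * W) =
      orbitEnergy H (W * ρ * star (W : Matrix (Fin d) (Fin d) ℂ)) U := by
  simp only [orbitEnergy, UnitaryGroup.mul_val, star_mul, mul_assoc]

theorem energy_sum_smul {ι : Type*} [Fintype ι] (w : ι → ℝ)
    (A : ι → Matrix (Fin d) (Fin d) ℂ) :
    energy H (∑ k, (w k : ℂ) • A k) = ∑ k, w k * energy H (A k) := by
  simp [energy, Finset.sum_mul, trace_sum, Complex.re_sum]

theorem energy_conj_of_commute {W : Matrix (Fin d) (Fin d) ℂ}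
    (hW : W ∈ unitaryGroup (Fin d) ℂ)
    (hWH : Commute W H) :
    energy H (W * ρ * star W) = energy H ρ := by
  have hcycle : (W * ρ * star W * H).trace = (ρ * (star W * (H * W))).trace := by
    rw [mul_assoc, mul_assoc, trace_mul_comm]
    simp only [mul_assoc]
  rw [energy, energy, hcycle, ← hWH.eq, ← mul_assoc (star W), Unitary.star_mul_self_of_mem hW,
    one_mul]

end OrbitEnergy

noncomputable def randomUnitaryChannel {d : ℕ} {ι : Type*} [Fintype ι] (w : ι → ℝ)
    (W : ι → unitaryGroup (Fin d) ℂ) (ρ : Matrix (Fin d) (Fin d) ℂ) : Matrix (Fin d) (Fin d) ℂ :=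
  ∑ k, (w k : ℂ) • ((W k : Matrix (Fin d) (Fin d) ℂ) * ρ * star (W k : Matrix (Fin d) (Fin d) ℂ))

section RandomUnitaryChannel

variable {d : ℕ} (H ρ : Matrix (Fin d) (Fin d) ℂ) {ι : Type*} [Fintype ι] (w : ι → ℝ)
  (W : ι → unitaryGroup (Fin d) ℂ)

theorem orbitEnergy_randomUnitaryChannel (U : unitaryGroup (Fin d) ℂ) :
    orbitEnergy H (randomUnitaryChannel w W ρ) U =
      ∑ k, w k * orbitEnergy H ρ (U * W k) := by
  simp only [orbitEnergy_mul]
  rw [orbitEnergy, randomUnitaryChannel, Finset.mul_sum, Finset.sum_mul]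
  simp only [mul_smul_comm, smul_mul_assoc]
  exact energy_sum_smul H w _

theorem iInf_orbitEnergy_le_randomUnitaryChannel (hw0 : ∀ k, 0 ≤ w k) (hw1 : ∑ k, w k = 1) :
    ⨅ U, orbitEnergy H ρ U ≤
      ⨅ U, orbitEnergy H (randomUnitaryChannel w W ρ) U := by
  refine le_ciInf fun U => ?_
  rw [orbitEnergy_randomUnitaryChannel]
  calc ⨅ U, orbitEnergy H ρ U = ∑ k, w k * ⨅ U, orbitEnergy H ρ U := by
        rw [← Finset.sum_mul, hw1, one_mul]
    _ ≤ ∑ k, w k * orbitEnergy H ρ (U * W k) := by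
        gcongr with k
        · exact hw0 k
        · exact ciInf_le (bddBelow_range_orbitEnergy H ρ) _

theorem iSup_orbitEnergy_randomUnitaryChannel_le (hw0 : ∀ k, 0 ≤ w k) (hw1 : ∑ k, w k = 1) :
    ⨆ U, orbitEnergy H (randomUnitaryChannel w W ρ) U ≤
      ⨆ U, orbitEnergy H ρ U := by
  refine ciSup_le fun U => ?_
  rw [orbitEnergy_randomUnitaryChannel]
  calc ∑ k, w k * orbitEnergy H ρ (U * W k) ≤ ∑ k, w k * ⨆ U, orbitEnergy H ρ U := by
        gcongr with k
        · exact hw0 k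
        · exact le_ciSup (bddAbove_range_orbitEnergy H ρ) _
    _ = ⨆ U, orbitEnergy H ρ U := by rw [← Finset.sum_mul, hw1, one_mul]

theorem energy_randomUnitaryChannel_of_commute (hw1 : ∑ k, w k = 1)
    (hWH : ∀ k, Commute (W k : Matrix (Fin d) (Fin d) ℂ) H) :
    energy H (randomUnitaryChannel w W ρ) = energy H ρ := by
  simp only [randomUnitaryChannel, energy_sum_smul, energy_conj_of_commute H ρ (W _).2 (hWH _),
    ← Finset.sum_mul, hw1, one_mul]

theorem ergotropy_randomUnitaryChannel_le (hw0 : ∀ k, 0 ≤ w k) (hw1 : ∑ k, w k = 1)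
    (hWH : ∀ k, Commute (W k : Matrix (Fin d) (Fin d) ℂ) H) :
    ergotropy H (randomUnitaryChannel w W ρ) ≤ ergotropy H ρ := by
  rw [ergotropy_eq_sub_iInf_orbitEnergy, ergotropy_eq_sub_iInf_orbitEnergy,
    energy_randomUnitaryChannel_of_commute H ρ w W hw1 hWH]
  exact sub_le_sub_left (iInf_orbitEnergy_le_randomUnitaryChannel H ρ w W hw0 hw1) _

theorem antiErgotropy_randomUnitaryChannel_le (hw0 : ∀ k, 0 ≤ w k) (hw1 : ∑ k, w k = 1)
    (hWH : ∀ k, Commute (W k : Matrix (Fin d) (Fin d) ℂ) H) :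
    antiErgotropy H (randomUnitaryChannel w W ρ) ≤ antiErgotropy H ρ := by
  rw [antiErgotropy_eq_iSup_orbitEnergy_sub, antiErgotropy_eq_iSup_orbitEnergy_sub,
    energy_randomUnitaryChannel_of_commute H ρ w W hw1 hWH]
  exact sub_le_sub_right (iSup_orbitEnergy_randomUnitaryChannel_le H ρ w W hw0 hw1) _

end RandomUnitaryChannel

section Pinching

variable {d : ℕ} {ζ : ℂ}

def phaseMatrix (ζ : ℂ) (k : ℕ) : Matrix (Fin d) (Fin d) ℂ :=
  diagonal fun i => ζ ^ (k * (i : ℕ))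

theorem phaseMatrix_mem_unitaryGroup (hζ : ‖ζ‖ = 1) (k : ℕ) :
    (phaseMatrix ζ k : Matrix (Fin d) (Fin d) ℂ) ∈ unitaryGroup (Fin d) ℂ := by
  rw [mem_unitaryGroup_iff', phaseMatrix, star_eq_conjTranspose, diagonal_conjTranspose,
    diagonal_mul_diagonal]
  convert diagonal_one with i
  rw [Pi.star_apply, RCLike.star_def, map_pow, ← mul_pow, Complex.conj_mul', hζ]
  simp

theorem phaseMatrix_conj_apply (k : ℕ) (τ : Matrix (Fin d) (Fin d) ℂ) (i j : Fin d) :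
    (phaseMatrix ζ k * τ * star (phaseMatrix ζ k) : Matrix (Fin d) (Fin d) ℂ) i j =
      (ζ ^ (i : ℕ) * (starRingEnd ℂ ζ) ^ (j : ℕ)) ^ k * τ i j := by
  simp only [phaseMatrix, star_eq_conjTranspose, diagonal_conjTranspose, diagonal_mul,
    mul_diagonal, Pi.star_apply, RCLike.star_def, map_pow]
  ring

theorem IsPrimitiveRoot.sum_pow_mul_conj_pow (hζ : IsPrimitiveRoot ζ d) (i j : Fin d) :
    ∑ k : Fin d, (ζ ^ (i : ℕ) * (starRingEnd ℂ ζ) ^ (j : ℕ)) ^ (k : ℕ) =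
      if i = j then (d : ℂ) else 0 := by
  have hnorm : ‖ζ‖ = 1 := hζ.norm'_eq_one (Fin.pos i).ne'
  have hconj : starRingEnd ℂ ζ * ζ = 1 := by simp [Complex.conj_mul', hnorm]
  rw [Fin.sum_univ_eq_sum_range (fun k => (ζ ^ (i : ℕ) * (starRingEnd ℂ ζ) ^ (j : ℕ)) ^ k)]
  split_ifs with hij
  · subst hij
    simp [← mul_pow, mul_comm ζ, hconj]
  · have hne : ζ ^ (i : ℕ) * (starRingEnd ℂ ζ) ^ (j : ℕ) ≠ 1 := by
      intro h
      refine hij (Fin.ext (hζ.pow_inj i.isLt j.isLt ?_))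
      calc ζ ^ (i : ℕ) = ζ ^ (i : ℕ) * (starRingEnd ℂ ζ * ζ) ^ (j : ℕ) := by
            rw [hconj, one_pow, mul_one]
        _ = ζ ^ (j : ℕ) := by rw [mul_pow, ← mul_assoc, h, one_mul]
    have hpow : (ζ ^ (i : ℕ) * (starRingEnd ℂ ζ) ^ (j : ℕ)) ^ d = 1 := by
      rw [mul_pow, ← pow_mul, ← pow_mul, mul_comm _ d, mul_comm _ d, pow_mul, pow_mul,
        ← map_pow, hζ.pow_eq_one]
      simp
    rw [geom_sum_eq hne, hpow, sub_self, zero_div]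

theorem diagonal_diag_eq_sum_phaseMatrix_conj (hζ : IsPrimitiveRoot ζ d)
    (τ : Matrix (Fin d) (Fin d) ℂ) :
    diagonal (fun i => τ i i) =
      ∑ k : Fin d, ((d⁻¹ : ℝ) : ℂ) • (phaseMatrix ζ k * τ * star (phaseMatrix ζ k)) := by
  ext i j
  simp only [Matrix.sum_apply, Matrix.smul_apply, smul_eq_mul, phaseMatrix_conj_apply,
    ← Finset.mul_sum, ← Finset.sum_mul, hζ.sum_pow_mul_conj_pow]
  rcases eq_or_ne i j with rfl | hij
  · have hd : (d : ℂ) ≠ 0 := Nat.cast_ne_zero.mpr (Fin.pos i).ne'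
    simp [hd]
  · simp [hij]

theorem conj_diagonal_diag_eq_sum_phaseMatrix_conj (hζ : IsPrimitiveRoot ζ d)
    (V ρ : Matrix (Fin d) (Fin d) ℂ) :
    V * diagonal (fun i => (star V * ρ * V) i i) * star V =
      ∑ k : Fin d, ((d⁻¹ : ℝ) : ℂ) •
        (V * phaseMatrix ζ k * star V * ρ * star (V * phaseMatrix ζ k * star V)) := by
  rw [diagonal_diag_eq_sum_phaseMatrix_conj hζ, Finset.mul_sum, Finset.sum_mul]
  refine Finset.sum_congr rfl fun k _ => ?_
  simp only [mul_smul_comm, smul_mul_assoc, star_mul, star_star, mul_assoc]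

end Pinching

theorem dephasing_le_general {d : ℕ} (H ρ : Matrix (Fin d) (Fin d) ℂ)
    (V : Matrix.unitaryGroup (Fin d) ℂ)
    (hdiag : ∃ e : Fin d → ℝ,
      star (V : Matrix (Fin d) (Fin d) ℂ) * H * (V : Matrix (Fin d) (Fin d) ℂ)
        = Matrix.diagonal (fun i => (e i : ℂ))) :
    ergotropy H ((V : Matrix (Fin d) (Fin d) ℂ) *
        Matrix.diagonal (fun i =>
          (star (V : Matrix (Fin d) (Fin d) ℂ) * ρ * (V : Matrix (Fin d) (Fin d) ℂ)) i i) *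
        star (V : Matrix (Fin d) (Fin d) ℂ)) ≤ ergotropy H ρ ∧
    antiErgotropy H ((V : Matrix (Fin d) (Fin d) ℂ) *
        Matrix.diagonal (fun i =>
          (star (V : Matrix (Fin d) (Fin d) ℂ) * ρ * (V : Matrix (Fin d) (Fin d) ℂ)) i i) *
        star (V : Matrix (Fin d) (Fin d) ℂ)) ≤ antiErgotropy H ρ := by
  obtain rfl | hd := eq_or_ne d 0
  · rw [Subsingleton.elim (_ * _ * _) ρ]
    exact ⟨le_rfl, le_rfl⟩
  obtain ⟨e, he⟩ := hdiag
  have hζ := Complex.isPrimitiveRoot_exp d hd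
  let W : Fin d → unitaryGroup (Fin d) ℂ := fun k =>
    V * ⟨phaseMatrix _ k, phaseMatrix_mem_unitaryGroup (hζ.norm'_eq_one hd) k⟩ * star V
  have hHV : H = V * diagonal (fun i => (e i : ℂ)) * star (V : Matrix (Fin d) (Fin d) ℂ) := by
    rw [← he, ← mul_assoc, ← mul_assoc, Unitary.mul_star_self_of_mem V.2, one_mul, mul_assoc,
      Unitary.mul_star_self_of_mem V.2, mul_one]
  have hWH : ∀ k, Commute (W k : Matrix (Fin d) (Fin d) ℂ) H := fun k => by
    rw [hHV]
    exact (commute_diagonal _ _).map (Unitary.conjStarAlgAut ℂ _ V)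
  have hw : ∑ _k : Fin d, (d : ℝ)⁻¹ = 1 := by simp [hd]
  rw [conj_diagonal_diag_eq_sum_phaseMatrix_conj hζ _ ρ]
  exact ⟨ergotropy_randomUnitaryChannel_le H ρ _ W (fun _ => by positivity) hw hWH,
    antiErgotropy_randomUnitaryChannel_le H ρ _ W (fun _ => by positivity) hw hWH⟩

/-- Dephasing in an eigenbasis of H does not increase ergotropy nor anti-ergotropy. -/
theorem dephasing_le {d : ℕ} (H ρ : Matrix (Fin d) (Fin d) ℂ) (hH : H.IsHermitian)
    (hρ : ρ.PosSemidef) (ht : ρ.trace = 1)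
    (V : Matrix.unitaryGroup (Fin d) ℂ)
    (hdiag : ∃ e : Fin d → ℝ,
      star (V : Matrix (Fin d) (Fin d) ℂ) * H * (V : Matrix (Fin d) (Fin d) ℂ)
        = Matrix.diagonal (fun i => (e i : ℂ))) :
    ergotropy H ((V : Matrix (Fin d) (Fin d) ℂ) *
        Matrix.diagonal (fun i =>
          (star (V : Matrix (Fin d) (Fin d) ℂ) * ρ * (V : Matrix (Fin d) (Fin d) ℂ)) i i) *
        star (V : Matrix (Fin d) (Fin d) ℂ)) ≤ ergotropy H ρ ∧
    antiErgotropy H ((V : Matrix (Fin d) (Fin d) ℂ) *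
        Matrix.diagonal (fun i =>
          (star (V : Matrix (Fin d) (Fin d) ℂ) * ρ * (V : Matrix (Fin d) (Fin d) ℂ)) i i) *
        star (V : Matrix (Fin d) (Fin d) ℂ)) ≤ antiErgotropy H ρ :=
  dephasing_le_general H ρ V hdiag
end

section
/- For an antisymmetric Hamiltonian (eigenvalues satisfying ε_k + ε_{d+1-k} = ε_min + ε_max for all k), the minimum ergotropy over all density matrices of mean energy E equals max(0, 2(E - ε_mean)), where ε_mean = (ε_min + ε_max)/2. -/
open Matrix
open scoped BigOperators ComplexOrder

/-! Let `a ≤ b` be the extreme eigenvalues. The passive energy of `ρ` is an infimum over its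
unitary orbit, which contains `ρ` itself and its image under the permutation reversing the
spectrum; by antisymmetry the latter has energy `a + b - E`. So the ergotropy is at least
`max 0 (2E - a - b)`. Conversely, mixing the ground state with the maximally mixed state (energy
`(a + b) / 2`, fixed by every unitary) gives passive states of every energy in `[a, (a + b) / 2]`,
and reversing such a state of energy `a + b - E` gives a state of energy `E` whose passive energy
is still `a + b - E`. -/

lemma Matrix.permMatrix_mem_unitaryGroup {n α : Type*} [Fintype n] [DecidableEq n] [CommRing α]
    [StarRing α] (σ : Equiv.Perm n) : σ.permMatrix α ∈ unitaryGroup n α := by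
  rw [mem_unitaryGroup_iff, star_eq_conjTranspose, conjTranspose_permMatrix, ← permMatrix_mul,
    inv_mul_cancel, permMatrix_one]

lemma Matrix.permMatrix_mul_mul_star {n α : Type*} [Fintype n] [DecidableEq n] [CommRing α]
    [StarRing α] (σ : Equiv.Perm n) (ρ : Matrix n n α) :
    σ.permMatrix α * ρ * star (σ.permMatrix α) = ρ.submatrix σ σ := by
  rw [star_eq_conjTranspose, conjTranspose_permMatrix]
  simp [PEquiv.toMatrix_toPEquiv_mul, PEquiv.mul_toMatrix_toPEquiv, Equiv.Perm.inv_def]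

lemma Fin.two_mul_sum_eq_of_add_rev_eq {d : ℕ} {f : Fin d → ℝ} {c : ℝ}
    (h : ∀ k, f k + f k.rev = c) : 2 * ∑ i, f i = d * c := by
  rw [two_mul]
  nth_rw 2 [← Equiv.sum_comp Fin.revPerm]
  simp [← Finset.sum_add_distrib, Fin.revPerm_apply, h]

section DensityMatrix

variable {d : ℕ}

def IsDensityMatrix (ρ : Matrix (Fin d) (Fin d) ℂ) : Prop :=
  ρ.PosSemidef ∧ ρ.trace = 1

noncomputable def passiveEnergy (H ρ : Matrix (Fin d) (Fin d) ℂ) : ℝ :=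
  ⨅ U : unitaryGroup (Fin d) ℂ,
    energy H ((U : Matrix (Fin d) (Fin d) ℂ) * ρ * star (U : Matrix (Fin d) (Fin d) ℂ))

lemma ergotropy_eq_energy_sub_passiveEnergy (H ρ : Matrix (Fin d) (Fin d) ℂ) :
    ergotropy H ρ = energy H ρ - passiveEnergy H ρ := rfl

lemma energy_add (H ρ σ : Matrix (Fin d) (Fin d) ℂ) :
    energy H (ρ + σ) = energy H ρ + energy H σ := by
  simp [energy, add_mul, trace_add]

lemma energy_smul (H ρ : Matrix (Fin d) (Fin d) ℂ) (c : ℝ) :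
    energy H (c • ρ) = c * energy H ρ := by
  simp [energy, trace_smul]

lemma IsDensityMatrix.unitary_conj {ρ : Matrix (Fin d) (Fin d) ℂ} (hρ : IsDensityMatrix ρ)
    (U : unitaryGroup (Fin d) ℂ) :
    IsDensityMatrix ((U : Matrix (Fin d) (Fin d) ℂ) * ρ * star (U : Matrix (Fin d) (Fin d) ℂ)) := by
  refine ⟨by simpa [star_eq_conjTranspose] using hρ.1.mul_mul_conjTranspose_same _, ?_⟩
  rw [trace_mul_cycle, UnitaryGroup.star_mul_self, one_mul, hρ.2]

lemma convex_isDensityMatrix : Convex ℝ {ρ : Matrix (Fin d) (Fin d) ℂ | IsDensityMatrix ρ} := by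
  rintro ρ ⟨hρ, hρ1⟩ σ ⟨hσ, hσ1⟩ s t hs ht hst
  refine ⟨(hρ.smul hs).add (hσ.smul ht), ?_⟩
  rw [trace_add, trace_smul, trace_smul, hρ1, hσ1, ← add_smul, hst, one_smul]

lemma isDensityMatrix_diagonal_single (i : Fin d) :
    IsDensityMatrix (diagonal (Pi.single i 1)) := by
  refine ⟨PosSemidef.diagonal fun j => ?_, by simp [trace_diagonal]⟩
  rcases eq_or_ne j i with rfl | h <;> simp [*]

lemma isDensityMatrix_inv_smul_one [NeZero d] :
    IsDensityMatrix ((d : ℝ)⁻¹ • (1 : Matrix (Fin d) (Fin d) ℂ)) := by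
  refine ⟨PosSemidef.one.smul (by positivity), ?_⟩
  simp [trace_smul, NeZero.ne]

lemma le_passiveEnergy {H ρ : Matrix (Fin d) (Fin d) ℂ} {c : ℝ}
    (h : ∀ U : unitaryGroup (Fin d) ℂ,
      c ≤ energy H ((U : Matrix (Fin d) (Fin d) ℂ) * ρ * star (U : Matrix (Fin d) (Fin d) ℂ))) :
    c ≤ passiveEnergy H ρ :=
  le_ciInf h

lemma passiveEnergy_unitary_conj (H ρ : Matrix (Fin d) (Fin d) ℂ) (V : unitaryGroup (Fin d) ℂ) :
    passiveEnergy H ((V : Matrix (Fin d) (Fin d) ℂ) * ρ * star (V : Matrix (Fin d) (Fin d) ℂ))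
      = passiveEnergy H ρ :=
  (Equiv.mulRight V).iInf_congr fun U => by simp [mul_assoc, star_mul]

lemma sum_re_diag_eq_one {ρ : Matrix (Fin d) (Fin d) ℂ} (htr : ρ.trace = 1) :
    ∑ i, (ρ i i).re = 1 := by
  simpa [trace] using congrArg Complex.re htr

section Diagonal

variable (eps : Fin d → ℝ)

lemma energy_diagonal (ρ : Matrix (Fin d) (Fin d) ℂ) :
    energy (diagonal fun i => (eps i : ℂ)) ρ = ∑ i, (ρ i i).re * eps i := by
  simp [energy, trace, mul_diagonal, Complex.re_sum, Complex.mul_re]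

lemma energy_diagonal_single (i : Fin d) :
    energy (diagonal fun i => (eps i : ℂ)) (diagonal (Pi.single i 1)) = eps i := by
  simp [energy_diagonal, Pi.single_apply, apply_ite Complex.re]

lemma energy_diagonal_smul_one (c : ℝ) :
    energy (diagonal fun i => (eps i : ℂ)) (c • 1) = c * ∑ i, eps i := by
  simp [energy_smul, energy_diagonal, one_apply]

variable {eps}

lemma energy_diagonal_reverse {c : ℝ} (hanti : ∀ k, eps k + eps k.rev = c)
    {ρ : Matrix (Fin d) (Fin d) ℂ} (htr : ρ.trace = 1) :
    energy (diagonal fun i => (eps i : ℂ))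
      (Fin.revPerm.permMatrix ℂ * ρ * star (Fin.revPerm.permMatrix ℂ))
      = c - energy (diagonal fun i => (eps i : ℂ)) ρ := by
  have hrev : ∀ k, eps k.rev = c - eps k := fun k => by linarith [hanti k]
  rw [permMatrix_mul_mul_star, energy_diagonal, energy_diagonal,
    ← Equiv.sum_comp Fin.revPerm]
  simp only [submatrix_apply, Fin.revPerm_apply, Fin.rev_rev, hrev, mul_sub,
    Finset.sum_sub_distrib, ← Finset.sum_mul, sum_re_diag_eq_one htr, one_mul]

lemma le_energy_diagonal {a : ℝ} (ha : ∀ i, a ≤ eps i) {ρ : Matrix (Fin d) (Fin d) ℂ}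
    (hρ : IsDensityMatrix ρ) : a ≤ energy (diagonal fun i => (eps i : ℂ)) ρ := by
  have htr := sum_re_diag_eq_one hρ.2
  calc a = ∑ i, (ρ i i).re * a := by rw [← Finset.sum_mul, htr, one_mul]
    _ ≤ _ := by
      rw [energy_diagonal]
      gcongr with i
      · exact (Complex.nonneg_iff.mp hρ.1.diag_nonneg).1
      · exact ha i

lemma passiveEnergy_diagonal_le_energy_conj {a : ℝ} (ha : ∀ i, a ≤ eps i)
    {ρ : Matrix (Fin d) (Fin d) ℂ} (hρ : IsDensityMatrix ρ) (U : unitaryGroup (Fin d) ℂ) :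
    passiveEnergy (diagonal fun i => (eps i : ℂ)) ρ
      ≤ energy (diagonal fun i => (eps i : ℂ))
          ((U : Matrix (Fin d) (Fin d) ℂ) * ρ * star (U : Matrix (Fin d) (Fin d) ℂ)) :=
  ciInf_le ⟨a, Set.forall_mem_range.mpr fun V => le_energy_diagonal ha (hρ.unitary_conj V)⟩ U

lemma passiveEnergy_diagonal_le_energy {a : ℝ} (ha : ∀ i, a ≤ eps i)
    {ρ : Matrix (Fin d) (Fin d) ℂ} (hρ : IsDensityMatrix ρ) :
    passiveEnergy (diagonal fun i => (eps i : ℂ)) ρ ≤ energy (diagonal fun i => (eps i : ℂ)) ρ := by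
  simpa using passiveEnergy_diagonal_le_energy_conj ha hρ 1

lemma passiveEnergy_diagonal_le_sub_energy {a c : ℝ} (ha : ∀ i, a ≤ eps i)
    (hanti : ∀ k, eps k + eps k.rev = c) {ρ : Matrix (Fin d) (Fin d) ℂ} (hρ : IsDensityMatrix ρ) :
    passiveEnergy (diagonal fun i => (eps i : ℂ)) ρ
      ≤ c - energy (diagonal fun i => (eps i : ℂ)) ρ :=
  (passiveEnergy_diagonal_le_energy_conj ha hρ
    ⟨_, permMatrix_mem_unitaryGroup Fin.revPerm⟩).trans_eq
    (energy_diagonal_reverse hanti hρ.2)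

lemma exists_isDensityMatrix_passiveEnergy_eq [NeZero d] {i₀ : Fin d} (h₀ : ∀ i, eps i₀ ≤ eps i)
    {E : ℝ} (hE : E ∈ Set.Icc (eps i₀) ((∑ i, eps i) / d)) :
    ∃ ρ, IsDensityMatrix ρ ∧ energy (diagonal fun i => (eps i : ℂ)) ρ = E ∧
      passiveEnergy (diagonal fun i => (eps i : ℂ)) ρ = E := by
  rw [← segment_eq_Icc (hE.1.trans hE.2)] at hE
  obtain ⟨s, t, hs, ht, hst, rfl⟩ := hE
  set μ : Matrix (Fin d) (Fin d) ℂ := (d : ℝ)⁻¹ • 1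
  have hμ : energy (diagonal fun i => (eps i : ℂ)) μ = (∑ i, eps i) / d := by
    rw [energy_diagonal_smul_one, inv_mul_eq_div]
  have hρ := convex_isDensityMatrix (isDensityMatrix_diagonal_single i₀)
    isDensityMatrix_inv_smul_one hs ht hst
  have hρE : energy (diagonal fun i => (eps i : ℂ)) (s • diagonal (Pi.single i₀ 1) + t • μ)
      = s • eps i₀ + t • ((∑ i, eps i) / d) := by
    rw [energy_add, energy_smul, energy_smul, energy_diagonal_single, hμ, smul_eq_mul, smul_eq_mul]
  refine ⟨_, hρ, hρE, le_antisymm ?_ (le_passiveEnergy fun U => ?_)⟩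
  · exact (passiveEnergy_diagonal_le_energy h₀ hρ).trans_eq hρE
  · have hconj : (U : Matrix (Fin d) (Fin d) ℂ) * (s • diagonal (Pi.single i₀ 1) + t • μ) *
        star (U : Matrix (Fin d) (Fin d) ℂ) = s • ((U : Matrix (Fin d) (Fin d) ℂ) *
          diagonal (Pi.single i₀ 1) * star (U : Matrix (Fin d) (Fin d) ℂ)) + t • μ := by
      simp [μ, mul_add, add_mul, Unitary.mul_star_self_of_mem U.2]
    rw [hconj, energy_add, energy_smul, energy_smul, hμ, smul_eq_mul, smul_eq_mul]
    gcongr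
    exact le_energy_diagonal h₀ ((isDensityMatrix_diagonal_single i₀).unitary_conj U)

end Diagonal

end DensityMatrix

theorem minErg_antisymmetric_general {d : ℕ} [NeZero d] (eps : Fin d → ℝ)
    (hanti : ∀ k : Fin d, eps k + eps k.rev = (⨅ i, eps i) + (⨆ i, eps i))
    (E : ℝ) (hE : E ∈ Set.Icc (⨅ i, eps i) (⨆ i, eps i)) :
    minErg (Matrix.diagonal fun i => (eps i : ℂ)) E
      = max 0 (2 * (E - ((⨅ i, eps i) + (⨆ i, eps i)) / 2)) := by
  obtain ⟨i₀, hi₀⟩ := exists_eq_ciInf_of_finite (f := eps)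
  set a := ⨅ i, eps i
  set b := ⨆ i, eps i
  have ha : ∀ i, a ≤ eps i := ciInf_le (Set.finite_range eps).bddBelow
  have hmean : (∑ i, eps i) / d = (a + b) / 2 := by
    rw [div_eq_div_iff (Nat.cast_ne_zero.2 (NeZero.ne d)) two_ne_zero]
    linarith [Fin.two_mul_sum_eq_of_add_rev_eq hanti]
  refine IsLeast.csInf_eq ⟨?_, ?_⟩
  · rcases le_total E ((a + b) / 2) with hEm | hEm
    · obtain ⟨ρ, hρ, hρE, hρP⟩ := exists_isDensityMatrix_passiveEnergy_eq (hi₀ ▸ ha)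
        (E := E) ⟨hi₀ ▸ hE.1, hmean ▸ hEm⟩
      refine ⟨ρ, hρ.1, hρ.2, hρE, ?_⟩
      rw [ergotropy_eq_energy_sub_passiveEnergy, hρE, hρP, max_eq_left (by linarith), sub_self]
    · obtain ⟨ρ, hρ, hρE, hρP⟩ := exists_isDensityMatrix_passiveEnergy_eq (hi₀ ▸ ha)
        (E := a + b - E) ⟨by linarith [hE.2], by linarith⟩
      set R : unitaryGroup (Fin d) ℂ := ⟨_, permMatrix_mem_unitaryGroup Fin.revPerm⟩
      have hRE := energy_diagonal_reverse hanti hρ.2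
      refine ⟨_, (hρ.unitary_conj R).1, (hρ.unitary_conj R).2, by rw [hRE, hρE]; ring, ?_⟩
      rw [ergotropy_eq_energy_sub_passiveEnergy, passiveEnergy_unitary_conj, hRE, hρE, hρP,
        max_eq_right (by linarith)]
      ring
  · rintro x ⟨ρ, hρ, htr, rfl, rfl⟩
    have hupper := passiveEnergy_diagonal_le_sub_energy ha hanti ⟨hρ, htr⟩
    rw [ergotropy_eq_energy_sub_passiveEnergy]
    exact max_le (sub_nonneg.2 (passiveEnergy_diagonal_le_energy ha ⟨hρ, htr⟩)) (by linarith)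

/-- For an antisymmetric Hamiltonian, the energy-constrained minimum ergotropy equals
max(0, 2(E - ε_mean)). -/
theorem minErg_antisymmetric {d : ℕ} [NeZero d] (eps : Fin d → ℝ)
    (hmono : Monotone eps)
    (hanti : ∀ k : Fin d, eps k + eps k.rev = (⨅ i, eps i) + (⨆ i, eps i))
    (E : ℝ) (hE : E ∈ Set.Icc (⨅ i, eps i) (⨆ i, eps i)) :
    minErg (Matrix.diagonal fun i => (eps i : ℂ)) E
      = max 0 (2 * (E - ((⨅ i, eps i) + (⨆ i, eps i)) / 2)) :=
  minErg_antisymmetric_general eps hanti E hE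
end
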